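/- For every 1 ≤ p < ∞ there exists a constant C > 0 such that for all n ≥ 1 the ℓ_p-distortion of the level-n Schreier graph Γ_n of the Grigorchuk group satisfies c_{(p)}(Γ_n) ≤ C. -/

import Mathlib

noncomputable section
open scoped ENNReal

/-- The generator `a` of the Grigorchuk group acting on finite binary words:
`a(xw) = (1−x)w`. -/
def grigA : List Bool → List Bool
  | [] => []
  | x :: w => (!x) :: w

mutual
  /-- The generator `b`: `b(0w) = 0·a(w)`, `b(1w) = 1·c(w)`. -/
  def grigB : List Bool → List Bool
    | [] => []
    | false :: w => false :: grigA w
    | true :: w => true :: grigC w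
  /-- The generator `c`: `c(0w) = 0·a(w)`, `c(1w) = 1·d(w)`. -/
  def grigC : List Bool → List Bool
    | [] => []
    | false :: w => false :: grigA w
    | true :: w => true :: grigD w
  /-- The generator `d`: `d(0w) = 0·w`, `d(1w) = 1·b(w)`. -/
  def grigD : List Bool → List Bool
    | [] => []
    | false :: w => false :: w
    | true :: w => true :: grigB w
end

/-- The level-`n` Schreier graph `Γ_n` of the Grigorchuk group: vertices are binary words of
length `n`, and distinct `x, y` are adjacent iff `y ∈ {a(x), b(x), c(x), d(x)}`
(the relation is symmetrized; since `a, b, c, d` are involutions it is the same relation). -/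
def grigGraph (n : ℕ) : SimpleGraph (List.Vector Bool n) where
  Adj x y := x ≠ y ∧ ∃ s ∈ [grigA, grigB, grigC, grigD],
    s x.toList = y.toList ∨ s y.toList = x.toList
  symm := ⟨by
    rintro x y ⟨h1, s, hs, h2⟩
    exact ⟨h1.symm, s, hs, h2.symm⟩⟩
  loopless := ⟨fun x h => h.1 rfl⟩

/-- The `ℓ_p`-distortion `c_{(p)}(X)` of a finite metric space `(X, d)`: the infimum over all
injective `1`-Lipschitz maps `F : X → ℓ_p(ℕ)` of `L_F = max_{x ≠ y} d(x,y)/‖F x − F y‖`. -/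
def lpDistortion (X : Type*) [Fintype X] (d : X → X → ℝ) (p : ℝ≥0∞) : ℝ :=
  sInf {L : ℝ | ∃ F : X → lp (fun _ : ℕ => ℝ) p, Function.Injective F ∧
    (∀ x y : X, ‖F x - F y‖ ≤ d x y) ∧
    L = sSup {r : ℝ | ∃ x y : X, x ≠ y ∧ r = d x y / ‖F x - F y‖}}

/-!
The Schreier graph `Γ_n` is a path on `2 ^ n` vertices. Number the words by `pathIndex`, a
reflected binary code whose least significant digit is the first letter: then `a` swaps the
positions `2k` and `2k + 1`, each of `b, c, d` either fixes a word or swaps the positions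
`2k + 1` and `2k + 2`, and every such swap is performed by one of them. A path embeds
isometrically into `ℝ`, hence into `ℓ_p` along a single coordinate, so `c_{(p)}(Γ_n) ≤ 1`.
-/

namespace SimpleGraph

variable {V W : Type*} {G : SimpleGraph V} {H : SimpleGraph W}

lemma Hom.edist_map_le (f : G →g H) (u v : V) : H.edist (f u) (f v) ≤ G.edist u v :=
  le_iInf fun w => (edist_le (w.map f)).trans_eq (by rw [Walk.length_map])

lemma Iso.edist_map (e : G ≃g H) (u v : V) : H.edist (e u) (e v) = G.edist u v :=
  le_antisymm (e.toHom.edist_map_le u v) (by simpa using e.symm.toHom.edist_map_le (e u) (e v))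

lemma Iso.dist_map (e : G ≃g H) (u v : V) : H.dist (e u) (e v) = G.dist u v := by
  rw [dist, dist, e.edist_map]

lemma natDist_le_length_of_walk_pathGraph {n : ℕ} {i j : Fin n} (w : (pathGraph n).Walk i j) :
    Nat.dist i j ≤ w.length := by
  induction w with
  | nil => simp
  | cons hadj _ ih =>
    rw [pathGraph_adj] at hadj
    rw [Walk.length_cons]
    unfold Nat.dist at ih ⊢
    omega

lemma pathGraph_dist_le {n : ℕ} (k : ℕ) {i j : Fin n} (h : (j : ℕ) = i + k) :
    (pathGraph n).dist i j ≤ k := by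
  induction k generalizing i with
  | zero => simp [Fin.ext h.symm]
  | succ k ih =>
    let i' : Fin n := ⟨i + 1, by omega⟩
    have hstep : (pathGraph n).dist i i' = 1 :=
      dist_eq_one_iff_adj.2 (pathGraph_adj.2 (.inl rfl))
    calc (pathGraph n).dist i j
        ≤ (pathGraph n).dist i i' + (pathGraph n).dist i' j :=
          (pathGraph_preconnected n i i').dist_triangle_left j
      _ ≤ 1 + k := by rw [hstep]; exact Nat.add_le_add_left (ih (by simp [i']; omega)) 1
      _ = k + 1 := by omega

lemma pathGraph_dist {n : ℕ} (i j : Fin n) : (pathGraph n).dist i j = Nat.dist i j := by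
  obtain ⟨w, hw⟩ := (pathGraph_preconnected n i j).exists_walk_length_eq_dist
  refine le_antisymm ?_ (hw ▸ natDist_le_length_of_walk_pathGraph w)
  rcases le_total (i : ℕ) j with h | h
  · exact pathGraph_dist_le _ (by rw [Nat.dist_eq_sub_of_le h]; omega)
  · rw [dist_comm]; exact pathGraph_dist_le _ (by rw [Nat.dist_eq_sub_of_le_right h]; omega)

end SimpleGraph

lemma Nat.cast_dist {R : Type*} [Ring R] [LinearOrder R] [IsStrictOrderedRing R] (a b : ℕ) :
    (Nat.dist a b : R) = |(a : R) - b| := by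
  rcases le_total a b with h | h
  · rw [Nat.dist_eq_sub_of_le h, Nat.cast_sub h, abs_sub_comm,
      abs_of_nonneg (sub_nonneg.2 (Nat.cast_le.2 h))]
  · rw [Nat.dist_eq_sub_of_le_right h, Nat.cast_sub h,
      abs_of_nonneg (sub_nonneg.2 (Nat.cast_le.2 h))]

lemma lpDistortion_le_one_of_isometry {X : Type*} [Fintype X] (d : X → X → ℝ)
    {p : ℝ≥0∞} (F : X → lp (fun _ : ℕ => ℝ) p) (hF : Function.Injective F)
    (hd : ∀ x y, ‖F x - F y‖ = d x y) : lpDistortion X d p ≤ 1 := by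
  have hratio :
      ∀ r ∈ {r : ℝ | ∃ x y : X, x ≠ y ∧ r = d x y / ‖F x - F y‖}, r ≤ 1 := by
    rintro r ⟨x, y, -, rfl⟩
    rw [← hd]
    exact div_self_le_one _
  refine le_trans (csInf_le ⟨0, ?_⟩ ⟨F, hF, fun x y => (hd x y).le, rfl⟩)
    (Real.sSup_le hratio zero_le_one)
  rintro L ⟨F', -, hF', rfl⟩
  refine Real.sSup_nonneg ?_
  rintro r ⟨x, y, -, rfl⟩
  exact div_nonneg ((lp.norm_nonneg' _).trans (hF' x y)) (lp.norm_nonneg' _)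

lemma lpDistortion_le_one_of_isometry_real {X : Type*} [Fintype X] (d : X → X → ℝ)
    {p : ℝ≥0∞} (hp : 0 < p) (φ : X → ℝ) (hφ : Function.Injective φ)
    (hd : ∀ x y, d x y = |φ x - φ y|) : lpDistortion X d p ≤ 1 := by
  refine lpDistortion_le_one_of_isometry d (fun x => lp.single p 0 (φ x))
    (fun x y h => hφ (by simpa using congrArg (fun f : lp (fun _ : ℕ => ℝ) p => f 0) h))
    fun x y => ?_
  rw [← lp.single_sub, lp.norm_single hp, Real.norm_eq_abs, hd]

def pathIndex : List Bool → ℕ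
  | [] => 0
  | false :: w => 2 * pathIndex w + (pathIndex w + 1) % 2
  | true :: w => 2 * pathIndex w + pathIndex w % 2

lemma pathIndex_lt_two_pow : ∀ w : List Bool, pathIndex w < 2 ^ w.length
  | [] => by simp [pathIndex]
  | x :: w => by
    have := pathIndex_lt_two_pow w
    rw [List.length_cons, pow_succ]
    cases x <;> simp only [pathIndex] <;> omega

lemma pathIndex_injective :
    ∀ {w v : List Bool}, w.length = v.length → pathIndex w = pathIndex v → w = v
  | [], [], _, _ => rfl
  | x :: w, y :: v, hl, h => by
    have hwv : w = v := pathIndex_injective (by simpa using hl) (by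
      cases x <;> cases y <;> simp only [pathIndex] at h <;> omega)
    subst hwv
    cases x <;> cases y <;> simp only [pathIndex] at h ⊢ <;> omega

lemma grigB_false (w : List Bool) : grigB (false :: w) = false :: grigA w := rfl
lemma grigB_true (w : List Bool) : grigB (true :: w) = true :: grigC w := rfl
lemma grigC_false (w : List Bool) : grigC (false :: w) = false :: grigA w := rfl
lemma grigC_true (w : List Bool) : grigC (true :: w) = true :: grigD w := rfl
lemma grigD_false (w : List Bool) : grigD (false :: w) = false :: w := rfl
lemma grigD_true (w : List Bool) : grigD (true :: w) = true :: grigB w := rfl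

lemma length_grigA (w : List Bool) : (grigA w).length = w.length := by
  cases w <;> rfl

lemma length_grigB_grigC_grigD (w : List Bool) :
    (grigB w).length = w.length ∧ (grigC w).length = w.length ∧
      (grigD w).length = w.length := by
  induction w with
  | nil => exact ⟨rfl, rfl, rfl⟩
  | cons x w ih =>
    cases x
    · simp [grigB_false, grigC_false, grigD_false, length_grigA]
    · simp [grigB_true, grigC_true, grigD_true, ih]

lemma pathIndex_grigA_div_two (w : List Bool) : pathIndex (grigA w) / 2 = pathIndex w / 2 := by
  rcases w with _ | ⟨_ | _, w⟩ <;>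
    simp only [grigA, pathIndex, Bool.not_true, Bool.not_false] <;>
    rcases Nat.mod_two_eq_zero_or_one (pathIndex w) with h | h <;> omega

lemma pathIndex_grigA_of_even {w : List Bool} (hw : w ≠ []) (h : pathIndex w % 2 = 0) :
    pathIndex (grigA w) = pathIndex w + 1 := by
  obtain ⟨x, w, rfl⟩ := List.exists_cons_of_ne_nil hw
  cases x <;> simp only [grigA, pathIndex, Bool.not_true, Bool.not_false] at h ⊢ <;> omega

lemma pathIndex_false_cons_succ_div_two {w v : List Bool}
    (h : pathIndex w / 2 = pathIndex v / 2) :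
    (pathIndex (false :: w) + 1) / 2 = (pathIndex (false :: v) + 1) / 2 := by
  simp only [pathIndex]
  rcases Nat.mod_two_eq_zero_or_one (pathIndex w) with hw | hw <;>
    rcases Nat.mod_two_eq_zero_or_one (pathIndex v) with hv | hv <;> omega

lemma pathIndex_true_cons_succ_div_two {w v : List Bool}
    (h : (pathIndex w + 1) / 2 = (pathIndex v + 1) / 2) :
    (pathIndex (true :: w) + 1) / 2 = (pathIndex (true :: v) + 1) / 2 := by
  simp only [pathIndex]
  rcases Nat.mod_two_eq_zero_or_one (pathIndex w) with hw | hw <;>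
    rcases Nat.mod_two_eq_zero_or_one (pathIndex v) with hv | hv <;> omega

/-- `(i + 1) / 2 = (j + 1) / 2` says that `i = j` or `{i, j} = {2k + 1, 2k + 2}` for some `k`. -/
lemma pathIndex_grigB_grigC_grigD (w : List Bool) :
    (pathIndex (grigB w) + 1) / 2 = (pathIndex w + 1) / 2 ∧
    (pathIndex (grigC w) + 1) / 2 = (pathIndex w + 1) / 2 ∧
    (pathIndex (grigD w) + 1) / 2 = (pathIndex w + 1) / 2 := by
  induction w with
  | nil => exact ⟨rfl, rfl, rfl⟩
  | cons x w ih =>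
    obtain ⟨hb, hc, hd⟩ := ih
    cases x
    · have ha := pathIndex_false_cons_succ_div_two (pathIndex_grigA_div_two w)
      exact ⟨ha, ha, rfl⟩
    · exact ⟨pathIndex_true_cons_succ_div_two hc, pathIndex_true_cons_succ_div_two hd,
        pathIndex_true_cons_succ_div_two hb⟩

lemma exists_grigB_grigC_grigD_pathIndex_eq_succ :
    ∀ {w : List Bool}, pathIndex w % 2 = 1 → pathIndex w + 1 < 2 ^ w.length →
      ∃ s ∈ [grigB, grigC, grigD], pathIndex (s w) = pathIndex w + 1
  | [], hodd, _ => by simp [pathIndex] at hodd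
  | false :: w, hodd, hlt => by
    have hw : w ≠ [] := by rintro rfl; simp [pathIndex] at hlt
    refine ⟨grigB, by simp, ?_⟩
    simp only [pathIndex] at hodd
    simp only [grigB_false, pathIndex, pathIndex_grigA_of_even hw (by omega)]
    omega
  | true :: w, hodd, hlt => by
    simp only [pathIndex] at hodd hlt
    obtain ⟨s, hs, h⟩ := exists_grigB_grigC_grigD_pathIndex_eq_succ (w := w) (by omega)
      (by rw [List.length_cons, pow_succ] at hlt; omega)
    have hlift : pathIndex (true :: s w) = pathIndex (true :: w) + 1 := by
      simp only [pathIndex, h]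
      omega
    simp only [List.mem_cons, List.not_mem_nil, or_false] at hs
    rcases hs with rfl | rfl | rfl
    · exact ⟨grigD, by simp, hlift⟩
    · exact ⟨grigB, by simp, hlift⟩
    · exact ⟨grigC, by simp, hlift⟩

section Generators

variable {s : List Bool → List Bool} (hs : s ∈ [grigA, grigB, grigC, grigD])
include hs

lemma length_of_mem_generators (w : List Bool) : (s w).length = w.length := by
  simp only [List.mem_cons, List.not_mem_nil, or_false] at hs
  rcases hs with rfl | rfl | rfl | rfl
  · exact length_grigA w
  · exact (length_grigB_grigC_grigD w).1
  · exact (length_grigB_grigC_grigD w).2.1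
  · exact (length_grigB_grigC_grigD w).2.2

lemma pathIndex_le_of_mem_generators (w : List Bool) :
    pathIndex (s w) ≤ pathIndex w + 1 ∧ pathIndex w ≤ pathIndex (s w) + 1 := by
  simp only [List.mem_cons, List.not_mem_nil, or_false] at hs
  have hbcd := pathIndex_grigB_grigC_grigD w
  rcases hs with rfl | rfl | rfl | rfl
  · have := pathIndex_grigA_div_two w; omega
  all_goals omega

end Generators

lemma exists_generator_pathIndex_eq_succ {w : List Bool}
    (hlt : pathIndex w + 1 < 2 ^ w.length) :
    ∃ s ∈ [grigA, grigB, grigC, grigD], pathIndex (s w) = pathIndex w + 1 := by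
  rcases Nat.mod_two_eq_zero_or_one (pathIndex w) with h | h
  · have hw : w ≠ [] := by rintro rfl; simp at hlt
    exact ⟨grigA, by simp, pathIndex_grigA_of_even hw h⟩
  · obtain ⟨s, hs, hsw⟩ := exists_grigB_grigC_grigD_pathIndex_eq_succ h hlt
    exact ⟨s, List.mem_cons_of_mem _ hs, hsw⟩

open SimpleGraph

lemma grigGraph_adj_of_pathIndex_succ {n : ℕ} {u v : List.Vector Bool n}
    (h : pathIndex u.toList + 1 = pathIndex v.toList) : (grigGraph n).Adj u v := by
  have hlt : pathIndex u.toList + 1 < 2 ^ u.toList.length := by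
    simpa [h] using pathIndex_lt_two_pow v.toList
  obtain ⟨s, hs, hsu⟩ := exists_generator_pathIndex_eq_succ hlt
  refine ⟨by rintro rfl; omega, s, hs, .inl (pathIndex_injective ?_ (hsu.trans h))⟩
  simp [length_of_mem_generators hs]

lemma grigGraph_adj_iff {n : ℕ} {u v : List.Vector Bool n} :
    (grigGraph n).Adj u v ↔ pathIndex u.toList + 1 = pathIndex v.toList ∨
      pathIndex v.toList + 1 = pathIndex u.toList := by
  refine ⟨fun ⟨hne, s, hs, hsuv⟩ => ?_, fun h => h.elim grigGraph_adj_of_pathIndex_succ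
    fun h => (grigGraph_adj_of_pathIndex_succ h).symm⟩
  have hne' : pathIndex u.toList ≠ pathIndex v.toList := fun h =>
    hne (List.Vector.toList_injective (pathIndex_injective (by simp) h))
  rcases hsuv with h | h
  · have := pathIndex_le_of_mem_generators hs u.toList; rw [h] at this; omega
  · have := pathIndex_le_of_mem_generators hs v.toList; rw [h] at this; omega

def pathIndexEquiv (n : ℕ) : List.Vector Bool n ≃ Fin (2 ^ n) :=
  Equiv.ofBijective
    (fun w => ⟨pathIndex w.toList, by simpa using pathIndex_lt_two_pow w.toList⟩) <|
    (Fintype.bijective_iff_injective_and_card _).2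
      ⟨fun u v h => List.Vector.toList_injective (pathIndex_injective (by simp) (Fin.mk.inj h)),
        by simp⟩

def grigGraphIsoPathGraph (n : ℕ) : grigGraph n ≃g pathGraph (2 ^ n) where
  toEquiv := pathIndexEquiv n
  map_rel_iff' := pathGraph_adj.trans grigGraph_adj_iff.symm

/-- cf. Proposition 9's context: for each `1 ≤ p < ∞` the `ℓ_p`-distortion of the
Schreier graphs `Γ_n` of the Grigorchuk group is uniformly bounded. -/
theorem statement_6 (p : ℝ) (hp : 1 ≤ p) :
    ∃ C : ℝ, 0 < C ∧ ∀ n : ℕ, 1 ≤ n →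
      lpDistortion (List.Vector Bool n)
          (fun x y => ((grigGraph n).dist x y : ℝ)) (ENNReal.ofReal p) ≤ C := by
  refine ⟨1, one_pos, fun n _ => ?_⟩
  let e := grigGraphIsoPathGraph n
  refine lpDistortion_le_one_of_isometry_real _ (ENNReal.ofReal_pos.2 (by linarith))
    (fun x => ((e x : ℕ) : ℝ)) (Nat.cast_injective.comp (Fin.val_injective.comp e.injective))
    fun x y => ?_
  rw [← e.dist_map, pathGraph_dist, Nat.cast_dist]
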